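/- arXiv:1906.10505 — 12 statements merged into one kernel-verified Lean document; each statement's English description precedes it below -/
import Mathlib

section
/- A set V belongs to τ^α if and only if V ⊆ int_τ(cl_τ(int_τ(V))). -/
/-!
The sets `V ⊆ interior (closure (interior V))` contain every `U \ N` with `U` open and `N` nowhere
dense, since `U` lies in the closure of the open set `U \ closure N ⊆ interior (U \ N)`. They are
closed under unions and finite intersections, so they contain the topology generated by these
differences. Conversely such a `V` is `W \ (W \ V)` for the open set `W = interior (closure
(interior V))`, and `W \ V` lies in the frontier of the open set `interior V`, which is nowhere
dense.
-/

/-- The collection τ^α = {V \ N : V ∈ τ, N nowhere dense in (X,τ)}. -/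
def alphaOpens (X : Type*) [TopologicalSpace X] : Set (Set X) :=
  {U | ∃ V N : Set X, IsOpen V ∧ IsNowhereDense N ∧ U = V \ N}

/-- The topology τ^α (generated by the collection `alphaOpens`, which is itself a topology). -/
def tAlpha (X : Type*) [TopologicalSpace X] : TopologicalSpace X :=
  TopologicalSpace.generateFrom (alphaOpens X)

open Set

section

variable {X : Type*} [TopologicalSpace X]

theorem IsOpen.isNowhereDense_frontier {s : Set X} (hs : IsOpen s) :
    IsNowhereDense (frontier s) := by
  rw [isClosed_frontier.isNowhereDense_iff, ← frontier_compl]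
  exact interior_frontier hs.isClosed_compl

theorem IsOpen.sdiff_subset_interior_closure_interior {U N : Set X} (hU : IsOpen U)
    (hN : IsNowhereDense N) : U \ N ⊆ interior (closure (interior (U \ N))) := by
  have hdense : Dense (closure N)ᶜ :=
    (isClosed_isNowhereDense_iff_compl.mp ⟨isClosed_closure, hN.closure⟩).2
  have hinner : U ∩ (closure N)ᶜ ⊆ interior (U \ N) :=
    (hU.inter isClosed_closure.isOpen_compl).subset_interior_iff.mpr
      (inter_subset_inter_right U (compl_subset_compl.mpr subset_closure))
  have hU_sub : U ⊆ closure (interior (U \ N)) :=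
    (hdense.open_subset_closure_inter hU).trans (closure_mono hinner)
  exact sdiff_subset.trans (interior_maximal hU_sub hU)

theorem mem_alphaOpens_of_subset_interior_closure_interior {V : Set X}
    (hV : V ⊆ interior (closure (interior V))) : V ∈ alphaOpens X := by
  refine ⟨interior (closure (interior V)), interior (closure (interior V)) \ V,
    isOpen_interior, ?_, (sdiff_sdiff_cancel_left hV).symm⟩
  refine (isOpen_interior (s := V)).isNowhereDense_frontier.mono ?_
  rw [← closure_sdiff_interior, interior_interior]
  exact sdiff_subset_sdiff interior_subset interior_subset

theorem IsOpen.interior_closure_inter_interior_closure_subset {U V : Set X} (hU : IsOpen U) :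
    interior (closure U) ∩ interior (closure V) ⊆ closure (U ∩ V) :=
  calc interior (closure U) ∩ interior (closure V)
      ⊆ closure U ∩ interior (closure V) := inter_subset_inter_left _ interior_subset
    _ ⊆ closure (U ∩ interior (closure V)) := isOpen_interior.closure_inter
    _ ⊆ closure (U ∩ closure V) := closure_mono (inter_subset_inter_right _ interior_subset)
    _ ⊆ closure (U ∩ V) := closure_minimal hU.inter_closure isClosed_closure

theorem inter_subset_interior_closure_interior {A B : Set X}
    (hA : A ⊆ interior (closure (interior A))) (hB : B ⊆ interior (closure (interior B))) :
    A ∩ B ⊆ interior (closure (interior (A ∩ B))) := by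
  refine (inter_subset_inter hA hB).trans
    (interior_maximal ?_ (isOpen_interior.inter isOpen_interior))
  rw [interior_inter]
  exact isOpen_interior.interior_closure_inter_interior_closure_subset

theorem sUnion_subset_interior_closure_interior {S : Set (Set X)}
    (hS : ∀ A ∈ S, A ⊆ interior (closure (interior A))) :
    ⋃₀ S ⊆ interior (closure (interior (⋃₀ S))) :=
  sUnion_subset fun A hA =>
    (hS A hA).trans (interior_mono (closure_mono (interior_mono (subset_sUnion_of_mem hA))))

end

theorem mem_tauAlpha_iff {X : Type*} [TopologicalSpace X] (V : Set X) :
    @IsOpen X (tAlpha X) V ↔ V ⊆ interior (closure (interior V)) := by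
  refine ⟨fun hV => ?_,
    fun hV => .basic V (mem_alphaOpens_of_subset_interior_closure_interior hV)⟩
  induction hV with
  | basic _ hU =>
    obtain ⟨U, N, hU, hN, rfl⟩ := hU
    exact hU.sdiff_subset_interior_closure_interior hN
  | univ => simp
  | inter A B _ _ hA hB => exact inter_subset_interior_closure_interior hA hB
  | sUnion S _ hS => exact sUnion_subset_interior_closure_interior hS
end

section
/- For A ⊆ X and x ∉ A, x belongs to the τ^α-closure of A if and only if x belongs to cl_τ(int_τ(cl_τ(A))). -/
/-! The sets `V \ N` form a basis of `τ^α`. If an open `U ∋ x` missed `int (cl A)`, then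
`U ∩ A` would be nowhere dense and `U \ A` an `α`-open neighbourhood of `x` missing `A`.
Conversely, if `V ∋ x` meets `int (cl A)`, removing the closed nowhere dense set `cl N`
leaves a nonempty open subset of `cl A`, which therefore meets `A`. -/

open Set TopologicalSpace

section NowhereDense

variable {X : Type*} [TopologicalSpace X]

theorem isNowhereDense_iff_dense_compl_closure {s : Set X} :
    IsNowhereDense s ↔ Dense (closure s)ᶜ :=
  interior_eq_empty_iff_dense_compl

theorem IsNowhereDense.union {s t : Set X} (hs : IsNowhereDense s) (ht : IsNowhereDense t) :
    IsNowhereDense (s ∪ t) := by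
  rw [isNowhereDense_iff_dense_compl_closure] at *
  rw [closure_union, compl_union]
  exact hs.inter_of_isOpen_left ht isClosed_closure.isOpen_compl

theorem isNowhereDense_inter_of_disjoint_interior_closure {U A : Set X}
    (hdisj : Disjoint U (interior (closure A))) : IsNowhereDense (U ∩ A) := by
  rw [isNowhereDense_iff_disjoint]
  exact hdisj.mono inter_subset_left (interior_mono (closure_mono inter_subset_right))

theorem IsOpen.diff_inter_nonempty_of_inter_interior_closure_nonempty {V N A : Set X}
    (hV : IsOpen V) (hN : IsNowhereDense N) (h : (V ∩ interior (closure A)).Nonempty) :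
    ((V \ N) ∩ A).Nonempty := by
  have hO : IsOpen (V ∩ interior (closure A) ∩ (closure N)ᶜ) :=
    (hV.inter isOpen_interior).inter isClosed_closure.isOpen_compl
  obtain ⟨z, hz⟩ := (isNowhereDense_iff_dense_compl_closure.1 hN).inter_open_nonempty _
    (hV.inter isOpen_interior) h
  obtain ⟨w, hwA, ⟨hwV, -⟩, hwN⟩ := (closure_inter_open_nonempty_iff hO).1
    ⟨z, interior_subset hz.1.2, hz.1, hz.2⟩
  exact ⟨w, ⟨hwV, fun hw ↦ hwN (subset_closure hw)⟩, hwA⟩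

end NowhereDense

theorem alphaOpens_isTopologicalBasis (X : Type*) [TopologicalSpace X] :
    @IsTopologicalBasis X (tAlpha X) (alphaOpens X) := by
  refine @isTopologicalBasis_of_subbasis_of_finiteInter X (tAlpha X) _ rfl ⟨?_, ?_⟩
  · exact ⟨univ, ∅, isOpen_univ, isNowhereDense_empty, sdiff_empty.symm⟩
  · rintro _ ⟨V₁, N₁, hV₁, hN₁, rfl⟩ _ ⟨V₂, N₂, hV₂, hN₂, rfl⟩
    exact ⟨V₁ ∩ V₂, N₁ ∪ N₂, hV₁.inter hV₂, hN₁.union hN₂, by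
      ext; simp only [mem_inter_iff, mem_sdiff, mem_union]; tauto⟩

theorem mem_closure_tauAlpha_iff {X : Type*} [TopologicalSpace X]
    (A : Set X) (x : X) (hx : x ∉ A) :
    x ∈ @closure X (tAlpha X) A ↔ x ∈ closure (interior (closure A)) := by
  rw [@IsTopologicalBasis.mem_closure_iff X (tAlpha X) _ (alphaOpens_isTopologicalBasis X),
    mem_closure_iff]
  constructor
  · intro h U hU hxU
    refine not_disjoint_iff_nonempty_inter.1 fun hdisj ↦ ?_
    have hUA : IsNowhereDense (U ∩ A) := isNowhereDense_inter_of_disjoint_interior_closure hdisj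
    obtain ⟨y, hyU, hyA⟩ := h (U \ A) ⟨U, U ∩ A, hU, hUA, sdiff_self_inter.symm⟩ ⟨hxU, hx⟩
    exact hyU.2 hyA
  · rintro h _ ⟨V, N, hV, hN, rfl⟩ hxVN
    exact hV.diff_inter_nonempty_of_inter_interior_closure_nonempty hN (h V hV hxVN.1)
end

section
/- Let X be a countable regular T1 space in which every non-isolated point x has the property p⁻ (with respect to the ideal I_x of subsets of X not accumulating at x). Then X is discretely generated: for every A ⊆ X and x ∈ cl(A), there is a discrete subset E ⊆ A with x ∈ cl(E). -/
/-!
Let `x ∈ cl A \ A`. Enumerate the points `y ≠ x` and give each one an open neighbourhood `U y`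
whose closure misses `x` (the space is Hausdorff). Removing from `A` the first `n` of these
neighbourhoods gives a decreasing sequence `Aₙ` of sets accumulating at `x` whose successive
differences do not, so the p⁻ property yields `B` accumulating at `x` with `B ⊆* Aₙ` for all `n`.
Then `E = (B \ {x}) ∩ A` still accumulates at `x`, and it is discrete because `U y` meets it only
inside the finite set `B \ Aₙ`, where `n` is the index following that of `y`.
-/

open Set Topology

section

variable {X : Type*} [TopologicalSpace X]

theorem exists_isOpen_mem_notMem_closure [T2Space X] {x y : X} (h : y ≠ x) :
    ∃ U, IsOpen U ∧ y ∈ U ∧ x ∉ closure U := by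
  obtain ⟨u, v, hu, hv, hyu, hxv, huv⟩ := t2_separation h
  exact ⟨u, hu, hyu, fun hx => (huv.closure_left hv).ne_of_mem hx hxv rfl⟩

theorem exists_isOpen_inter_eq_singleton_of_finite [T1Space X] {E U : Set X} {y : X}
    (hU : IsOpen U) (hyU : y ∈ U) (hyE : y ∈ E) (hfin : (U ∩ E).Finite) :
    ∃ V, IsOpen V ∧ V ∩ E = {y} := by
  refine ⟨U \ ((U ∩ E) \ {y}), hU.sdiff (hfin.sdiff).isClosed, ?_⟩
  ext z
  simp only [mem_inter_iff, mem_sdiff, mem_singleton_iff]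
  constructor
  · tauto
  · rintro rfl
    tauto

theorem mem_closure_inter_of_finite_diff [T1Space X] {s t : Set X} {x : X}
    (hx : x ∈ closure s) (hxs : x ∉ s) (hfin : (s \ t).Finite) : x ∈ closure (s ∩ t) := by
  rw [← inter_union_sdiff s t, closure_union, hfin.isClosed.closure_eq] at hx
  exact hx.resolve_right fun h => hxs h.1

theorem mem_closure_diff_biUnion_lt {A : Set X} {V : ℕ → Set X} {x : X}
    (hx : x ∈ closure A) (hV : ∀ k, x ∉ closure (V k)) (n : ℕ) :
    x ∈ closure (A \ ⋃ k < n, V k) :=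
  closure_sdiff ⟨hx, by
    simp only [closure_iUnion₂_lt_nat, mem_iUnion₂, not_exists]
    exact fun k _ => hV k⟩

end

theorem diff_biUnion_lt_diff_succ_subset {α : Type*} (A : Set α) (V : ℕ → Set α) (n : ℕ) :
    (A \ ⋃ k < n, V k) \ (A \ ⋃ k < n + 1, V k) ⊆ V n := by
  rw [biUnion_lt_succ]
  intro z
  simp only [mem_sdiff, mem_union]
  tauto

theorem exists_decreasing_seq_of_mem_closure {X : Type*} [TopologicalSpace X] [Countable X]
    [T2Space X] {A : Set X} {x : X} (hx : x ∈ closure A) (hxA : x ∉ A) :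
    ∃ As : ℕ → Set X, (∀ n, As (n + 1) ⊆ As n) ∧ As 0 = A ∧ (∀ n, x ∈ closure (As n)) ∧
      (∀ n, x ∉ closure (As n \ As (n + 1))) ∧
      ∀ y ≠ x, ∃ U, IsOpen U ∧ y ∈ U ∧ ∃ n, Disjoint U (As n) := by
  obtain ⟨a, -, ha⟩ := mem_closure_iff.1 hx univ isOpen_univ trivial
  have : Nonempty {y : X // y ≠ x} := ⟨⟨a, ne_of_mem_of_not_mem ha hxA⟩⟩
  obtain ⟨f, hf⟩ := exists_surjective_nat {y : X // y ≠ x}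
  choose U hUo hyU hxU using fun y : {y : X // y ≠ x} => exists_isOpen_mem_notMem_closure y.2
  have hantitone (n : ℕ) : A \ ⋃ k < n + 1, U (f k) ⊆ A \ ⋃ k < n, U (f k) := by
    rw [biUnion_lt_succ]
    exact sdiff_subset_sdiff_right subset_union_left
  have hdiff (n : ℕ) : x ∉ closure ((A \ ⋃ k < n, U (f k)) \ (A \ ⋃ k < n + 1, U (f k))) :=
    fun h => hxU (f n) (closure_mono (diff_biUnion_lt_diff_succ_subset A (U ∘ f) n) h)
  refine ⟨fun n => A \ ⋃ k < n, U (f k), hantitone, by simp,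
    mem_closure_diff_biUnion_lt hx (fun k => hxU (f k)), hdiff, fun y hy => ?_⟩
  obtain ⟨n, hn⟩ := hf ⟨y, hy⟩
  refine ⟨U (f n), hUo _, hn ▸ hyU _, n + 1, disjoint_left.2 fun z hz hzA => ?_⟩
  exact hzA.2 (mem_iUnion₂.2 ⟨n, n.lt_succ_self, hz⟩)

/-- If `X` is a countable regular T1 space in which every non-isolated point is a p⁻ point
(with respect to the ideal of sets not accumulating at the point), then `X` is
discretely generated. -/
theorem discretely_generated_of_pminus {X : Type*} [TopologicalSpace X] [Countable X]
    [T1Space X] [RegularSpace X]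
    (hp : ∀ x : X, ¬ IsOpen ({x} : Set X) →
      ∀ A : ℕ → Set X, (∀ n, A (n + 1) ⊆ A n) →
        (∀ n, x ∈ closure (A n \ {x})) →
        (∀ n, x ∉ closure ((A n \ A (n + 1)) \ {x})) →
        ∃ B : Set X, x ∈ closure (B \ {x}) ∧ ∀ n, (B \ A n).Finite) :
    ∀ (A : Set X) (x : X), x ∈ closure A →
      ∃ E ⊆ A, (∀ y ∈ E, ∃ U : Set X, IsOpen U ∧ U ∩ E = {y}) ∧ x ∈ closure E := by
  intro A x hx
  by_cases hxA : x ∈ A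
  · refine ⟨{x}, singleton_subset_iff.2 hxA, fun y hy => ⟨univ, isOpen_univ, ?_⟩,
      subset_closure rfl⟩
    rw [univ_inter, eq_of_mem_singleton hy]
  have hniso : ¬ IsOpen ({x} : Set X) := fun h =>
    hxA <| by simpa using mem_closure_iff.1 hx {x} h rfl
  obtain ⟨As, hmono, hA0, hxAs, hxdiff, hsep⟩ := exists_decreasing_seq_of_mem_closure hx hxA
  have hAsA : ∀ n, As n ⊆ A := fun n => hA0 ▸ antitone_nat_of_succ_le hmono n.zero_le
  obtain ⟨B, hxB, hBfin⟩ := hp x hniso As hmono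
    (fun n => by rw [sdiff_singleton_eq_self fun h => hxA (hAsA n h)]; exact hxAs n)
    (fun n h => hxdiff n (closure_mono sdiff_subset h))
  refine ⟨(B \ {x}) ∩ A, inter_subset_right, ?_, ?_⟩
  · rintro y ⟨⟨hyB, hyx⟩, hyA⟩
    obtain ⟨U, hUo, hyU, n, hUn⟩ := hsep y hyx
    refine exists_isOpen_inter_eq_singleton_of_finite hUo hyU ⟨⟨hyB, hyx⟩, hyA⟩
      ((hBfin n).subset ?_)
    exact fun z ⟨hzU, ⟨hzB, _⟩, _⟩ => ⟨hzB, hUn.notMem_of_mem_left hzU⟩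
  · refine mem_closure_inter_of_finite_diff hxB (fun h => h.2 rfl) ((hBfin 0).subset ?_)
    rw [hA0]
    exact sdiff_subset_sdiff_left sdiff_subset
end

section
/- Every countable space with an F_σ base is p⁺ at every non-isolated point, i.e., for every non-isolated point x, given a decreasing sequence (A_n) of subsets of X each accumulating at x, there exists A accumulating at x with A ⊆* A_n for all n. -/
/-!
Write the F_σ set of indicators of basic open sets as `⋃ m, C m` with `C m` closed, hence compact
in the Cantor cube. The indicators in `C m` of basic neighbourhoods of `x` form a compact set, each
member of which takes the value `true` somewhere on `A m \ {x}`; by compactness a finite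
`F m ⊆ A m \ {x}` already does this for all of them. Then `⋃ m, F m` meets every basic
neighbourhood of `x`, and it is almost contained in each `A n` because `F m ⊆ A n` for `m ≥ n`.
-/

open Set

theorem IsCompact.exists_finite_subset_forall_exists_eq_true {X : Type*} {K : Set (X → Bool)}
    (hK : IsCompact K) {S : Set X} (hS : ∀ f ∈ K, ∃ a ∈ S, f a = true) :
    ∃ F ⊆ S, F.Finite ∧ ∀ f ∈ K, ∃ a ∈ F, f a = true := by
  have hopen : ∀ a ∈ S, IsOpen {f : X → Bool | f a = true} := fun a _ =>
    (isOpen_discrete {true}).preimage (continuous_apply (A := fun _ : X => Bool) a)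
  have hcover : K ⊆ ⋃ a ∈ S, {f : X → Bool | f a = true} := fun f hf => by
    simpa only [mem_iUnion₂, mem_ofPred_eq, exists_prop] using hS f hf
  obtain ⟨F, hFS, hFfin, hFcover⟩ := hK.elim_finite_subcover_image hopen hcover
  refine ⟨F, hFS, hFfin, fun f hf => ?_⟩
  simpa only [mem_iUnion₂, mem_ofPred_eq, exists_prop] using hFcover hf

theorem Antitone.finite_iUnion_diff {X : Type*} {A F : ℕ → Set X} (hA : Antitone A)
    (hF : ∀ m, (F m).Finite) (hFA : ∀ m, F m ⊆ A m) (n : ℕ) : ((⋃ m, F m) \ A n).Finite := by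
  refine ((finite_Iio n).biUnion fun m _ => hF m).subset ?_
  rintro a ⟨ha, haA⟩
  obtain ⟨m, hm⟩ := mem_iUnion.mp ha
  have hmn : m < n := lt_of_not_ge fun hnm => haA (hA hnm (hFA m hm))
  exact mem_biUnion hmn hm

theorem pplus_of_Fsigma_base_general {X : Type*} [TopologicalSpace X]
    (B : Set (Set X))
    (hbase : TopologicalSpace.IsTopologicalBasis B)
    (hFs : ∃ C : ℕ → Set (X → Bool), (∀ n, IsClosed (C n)) ∧
      (fun U : Set X => U.boolIndicator) '' B = ⋃ n, C n) :
    ∀ x : X, ¬ IsOpen ({x} : Set X) →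
      ∀ A : ℕ → Set X, (∀ n, A (n + 1) ⊆ A n) →
        (∀ n, x ∈ closure (A n \ {x})) →
        ∃ A' : Set X, x ∈ closure (A' \ {x}) ∧ ∀ n, (A' \ A n).Finite := by
  intro x _ A hdec hacc
  obtain ⟨C, hCclosed, hCB⟩ := hFs
  have hK : ∀ m, IsCompact (C m ∩ {f | f x = true}) := fun m =>
    ((hCclosed m).inter (isClosed_eq (continuous_apply x) continuous_const)).isCompact
  have hmeet : ∀ m, ∀ f ∈ C m ∩ {f | f x = true}, ∃ a ∈ A m \ {x}, f a = true := by
    rintro m f ⟨hfC, hfx⟩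
    obtain ⟨U, hUB, rfl⟩ : f ∈ (fun U : Set X => U.boolIndicator) '' B :=
      hCB ▸ mem_iUnion.mpr ⟨m, hfC⟩
    obtain ⟨a, haU, haA⟩ := (hbase.mem_closure_iff.mp (hacc m)) U hUB
      ((mem_iff_boolIndicator U x).mpr hfx)
    exact ⟨a, haA, (mem_iff_boolIndicator U a).mp haU⟩
  choose F hFA hFfin hFmeet using fun m => (hK m).exists_finite_subset_forall_exists_eq_true (hmeet m)
  refine ⟨⋃ m, F m, hbase.mem_closure_iff.mpr fun U hUB hxU => ?_,
    (antitone_nat_of_succ_le hdec).finite_iUnion_diff hFfin fun m => (hFA m).trans sdiff_subset⟩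
  obtain ⟨m, hm⟩ := mem_iUnion.mp (hCB ▸ mem_image_of_mem (fun U : Set X => U.boolIndicator) hUB)
  obtain ⟨a, haF, haU⟩ := hFmeet m _ ⟨hm, (mem_iff_boolIndicator U x).mp hxU⟩
  exact ⟨a, (mem_iff_boolIndicator U a).mpr haU, mem_iUnion.mpr ⟨m, haF⟩, (hFA m haF).2⟩

/-- Every countable space with an F_σ base (a base whose set of characteristic functions
is an F_σ subset of the Cantor cube `X → Bool`) is p⁺ at every non-isolated point. -/
theorem pplus_of_Fsigma_base {X : Type*} [TopologicalSpace X] [Countable X]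
    (B : Set (Set X))
    (hbase : TopologicalSpace.IsTopologicalBasis B)
    (hFs : ∃ C : ℕ → Set (X → Bool), (∀ n, IsClosed (C n)) ∧
      (fun U : Set X => U.boolIndicator) '' B = ⋃ n, C n) :
    ∀ x : X, ¬ IsOpen ({x} : Set X) →
      ∀ A : ℕ → Set X, (∀ n, A (n + 1) ⊆ A n) →
        (∀ n, x ∈ closure (A n \ {x})) →
        ∃ A' : Set X, x ∈ closure (A' \ {x}) ∧ ∀ n, (A' \ A n).Finite :=
  pplus_of_Fsigma_base_general B hbase hFs
end

section
/- Let X be a σ-compact topological space and W a countable collection of clopen subsets of X. Then W, as a subspace of 2^X with the product topology, has an F_σ base. -/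
/-!
Each member of `W` is a continuous map `X → Bool`, so the cylinders
`{f | f (x₁) = b₁, …, f (xₖ) = bₖ}` cut out of `W` form a base whose characteristic function
depends continuously on the parameters `(x, b) ∈ Xᵏ × 2ᵏ`. Hence the set of characteristic
functions of the base is a countable union of continuous images of the σ-compact spaces
`Xᵏ × 2ᵏ`: it is σ-compact, and its compact pieces are closed in the Hausdorff cube.
-/

open Set Topology TopologicalSpace

section FinCylinder

variable {X Y : Type*}

/-- Indexing by `Fin k` rather than by a `Finset X` makes the parameters of a cylinder range over
`(Fin k → X) × (Fin k → Y)`, which is σ-compact when `X` and `Y` are. -/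
def finCylinder {k : ℕ} (x : Fin k → X) (b : Fin k → Y) : Set (X → Y) :=
  {f | ∀ j, f (x j) = b j}

section Basis

variable [TopologicalSpace Y]

theorem isOpen_finCylinder [DiscreteTopology Y] {k : ℕ} (x : Fin k → X) (b : Fin k → Y) :
    IsOpen (finCylinder x b) := by
  have hInter : finCylinder x b = ⋂ j, (fun f : X → Y => f (x j)) ⁻¹' {b j} := by
    ext f; simp [finCylinder]
  rw [hInter]
  exact isOpen_iInter_of_finite fun j => (continuous_apply (x j)).isOpen_preimage _
    (isOpen_discrete _)

theorem exists_finCylinder_subset {s : Set (X → Y)} (hs : IsOpen s) {f : X → Y} (hf : f ∈ s) :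
    ∃ (k : ℕ) (x : Fin k → X), finCylinder x (f ∘ x) ⊆ s := by
  obtain ⟨I, u, hu, hIu⟩ := isOpen_pi_iff.1 hs f hf
  refine ⟨I.card, fun j => I.equivFin.symm j, fun g hg => hIu fun i hi => ?_⟩
  have hgi : g i = f i := by simpa using hg (I.equivFin ⟨i, hi⟩)
  exact hgi ▸ (hu i hi).2

theorem isTopologicalBasis_finCylinders [DiscreteTopology Y] :
    IsTopologicalBasis
      {S : Set (X → Y) | ∃ (k : ℕ) (x : Fin k → X) (b : Fin k → Y), finCylinder x b = S} := by
  refine isTopologicalBasis_of_isOpen_of_nhds ?_ fun f s hf hs => ?_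
  · rintro _ ⟨k, x, b, rfl⟩
    exact isOpen_finCylinder x b
  · obtain ⟨k, x, hxs⟩ := exists_finCylinder_subset hs hf
    exact ⟨_, ⟨k, x, f ∘ x, rfl⟩, fun _ => rfl, hxs⟩

end Basis

theorem isClopen_setOf_mem_finCylinder [TopologicalSpace X] [TopologicalSpace Y]
    [DiscreteTopology Y] {f : X → Y} (hf : Continuous f) (k : ℕ) :
    IsClopen {p : (Fin k → X) × (Fin k → Y) | f ∈ finCylinder p.1 p.2} := by
  have hcont : Continuous fun p : (Fin k → X) × (Fin k → Y) => (f ∘ p.1, p.2) :=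
    (continuous_pi fun j => hf.comp (continuous_apply j)).comp continuous_fst |>.prodMk
      continuous_snd
  convert (isClopen_discrete {q : (Fin k → Y) × (Fin k → Y) | q.1 = q.2}).preimage hcont
    using 1
  ext p
  simp [finCylinder, funext_iff]

section Indicator

variable [TopologicalSpace X] [TopologicalSpace Y] [DiscreteTopology Y] (W : Set (X → Y))

noncomputable def finCylinderIndicator (k : ℕ) : (Fin k → X) × (Fin k → Y) → (W → Bool) :=
  fun p => (Subtype.val ⁻¹' finCylinder p.1 p.2).boolIndicator

variable {W}

theorem continuous_finCylinderIndicator (hW : ∀ f ∈ W, Continuous f) (k : ℕ) :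
    Continuous (finCylinderIndicator W k) :=
  continuous_pi fun f => (continuous_boolIndicator_iff_isClopen _).2
    (isClopen_setOf_mem_finCylinder (hW f f.2) k)

theorem exists_isTopologicalBasis_isSigmaCompact_boolIndicator [SigmaCompactSpace X]
    [SigmaCompactSpace Y] (hW : ∀ f ∈ W, Continuous f) :
    ∃ B : Set (Set W), IsTopologicalBasis B ∧ IsSigmaCompact ((fun S => S.boolIndicator) '' B) := by
  refine ⟨_, isTopologicalBasis_finCylinders.isInducing IsInducing.subtypeVal, ?_⟩
  have hrange : (fun S : Set W => S.boolIndicator) '' (preimage Subtype.val ''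
      {S | ∃ (k : ℕ) (x : Fin k → X) (b : Fin k → Y), finCylinder x b = S}) =
      ⋃ k, range (finCylinderIndicator W k) := by
    ext χ
    simp [finCylinderIndicator]
  rw [hrange]
  exact isSigmaCompact_iUnion _ fun k =>
    isSigmaCompact_range (continuous_finCylinderIndicator hW k)

end Indicator

end FinCylinder

theorem Fsigma_base_of_clopen_family_general {X : Type*} [TopologicalSpace X] [SigmaCompactSpace X]
    (W : Set (Set X)) (hclopen : ∀ U ∈ W, IsClopen U) :
    ∃ B : Set (Set (↥((fun U : Set X => U.boolIndicator) '' W))),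
      TopologicalSpace.IsTopologicalBasis B ∧
      ∃ C : ℕ → Set ((↥((fun U : Set X => U.boolIndicator) '' W)) → Bool),
        (∀ n, IsClosed (C n)) ∧
        (fun S : Set (↥((fun U : Set X => U.boolIndicator) '' W)) => S.boolIndicator) '' B
          = ⋃ n, C n := by
  have hcont : ∀ f ∈ (fun U : Set X => U.boolIndicator) '' W, Continuous f := by
    rintro _ ⟨U, hU, rfl⟩
    exact (continuous_boolIndicator_iff_isClopen U).2 (hclopen U hU)
  obtain ⟨B, hB, K, hK, hKB⟩ := exists_isTopologicalBasis_isSigmaCompact_boolIndicator hcont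
  exact ⟨B, hB, K, fun n => (hK n).isClosed, hKB.symm⟩

/-- Let `X` be σ-compact and `W` a countable family of clopen subsets of `X`.  Then `W`,
viewed (via characteristic functions) as a subspace of the Cantor cube `X → Bool`, has an
F_σ base: a base of its topology whose set of characteristic functions is an F_σ subset of
the Cantor cube over that subspace. -/
theorem Fsigma_base_of_clopen_family {X : Type*} [TopologicalSpace X] [SigmaCompactSpace X]
    (W : Set (Set X)) (hWc : W.Countable) (hclopen : ∀ U ∈ W, IsClopen U) :
    ∃ B : Set (Set (↥((fun U : Set X => U.boolIndicator) '' W))),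
      TopologicalSpace.IsTopologicalBasis B ∧
      ∃ C : ℕ → Set ((↥((fun U : Set X => U.boolIndicator) '' W)) → Bool),
        (∀ n, IsClosed (C n)) ∧
        (fun S : Set (↥((fun U : Set X => U.boolIndicator) '' W)) => S.boolIndicator) '' B
          = ⋃ n, C n :=
  Fsigma_base_of_clopen_family_general W hclopen
end

section
/- There is a pairwise disjoint family {A_n : n ∈ ℕ} of finite subsets of 𝕏 (the family of finite unions of sets [s]×{n} with s ∈ 2^{<ω}, n ∈ ℕ, including ∅) such that for every infinite E ⊆ ℕ, the union ⋃_{k ∈ E} A_k is dense in 2^{2^ℕ × ℕ} with the product topology. -/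
/-- Points of the space `2^ℕ × ℕ`. -/
abbrev Pt : Type := (ℕ → Bool) × ℕ

/-- `𝕏`: the family of finite unions of basic clopen rectangles `[s] × {m}`
(including `∅`), viewed inside the cube `2^(2^ℕ × ℕ)` as `Pt → Bool`.
A piece is coded by `(s, len, m)`: the rectangle `[s ↾ len] × {m}`. -/
def XX : Set (Pt → Bool) :=
  {θ | ∃ L : List ((ℕ → Bool) × ℕ × ℕ),
    ∀ p : Pt, θ p = true ↔ ∃ q ∈ L, p.2 = q.2.2 ∧ ∀ i < q.2.1, p.1 i = q.1 i}

/-- An ideal on ℕ containing all finite sets. -/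
def IsIdeal (I : Set (Set ℕ)) : Prop :=
  (∀ A ∈ I, ∀ B, B ⊆ A → B ∈ I) ∧
  (∀ A ∈ I, ∀ B ∈ I, A ∪ B ∈ I) ∧
  (∀ A : Set ℕ, A.Finite → A ∈ I)

/-- The topology `ρ_I` on the cube `2^(2^ℕ × ℕ)`, generated by the sets
`(α,p)⁺` and `(α,p)⁻` for `α` the characteristic function of a member of `I`. -/
def rho (I : Set (Set ℕ)) : TopologicalSpace (Pt → Bool) :=
  TopologicalSpace.generateFrom
    {S | ∃ A ∈ I, ∃ p : ℕ,
      S = {θ | θ (A.boolIndicator, p) = true} ∨ S = {θ | θ (A.boolIndicator, p) = false}}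

/-- The subspace topology induced by `ρ_I` on a subset of the cube. -/
def subTop (S : Set (Pt → Bool)) (I : Set (Set ℕ)) : TopologicalSpace {θ // θ ∈ S} :=
  TopologicalSpace.induced Subtype.val (rho I)

/-- `ψ_n = φ_n ∪ ({α : α(n) = 1} × ℕ)`, for an enumeration `φ` of `𝕏`. -/
def psi (φ : ℕ → Pt → Bool) (n : ℕ) : Pt → Bool := fun p => φ n p || p.1 n

/-- `𝕐 = {ψ_n : n ∈ ℕ}`. -/
def YY (φ : ℕ → Pt → Bool) : Set (Pt → Bool) := Set.range (psi φ)

/-- `K* = {F ⊆ ℕ : {φ_n : n ∈ F} is nowhere dense in 𝕏(K)}`. -/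
def starIdeal (φ : ℕ → Pt → Bool) (K : Set (Set ℕ)) : Set (Set ℕ) :=
  {F | @IsNowhereDense _ (subTop XX K) {θ : {θ // θ ∈ XX} | ∃ n ∈ F, φ n = θ.1}}

/-!
Let `A n` consist of the sets that contain the whole level `2^ℕ × {n}`, nothing above it, and
on each level `m < n` an arbitrary union of cylinders `[s] × {m}` with `|s| = n`. The full top
level recovers `n`, so the `A n` are disjoint. A basic open set of the cube prescribes values at
finitely many points; once `n` exceeds their levels and prefixes of length `n` separate their
first coordinates, some member of `A n` takes the prescribed values, and an infinite `E`
contains such an `n`.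
-/

open Filter Set

lemma mem_XX_of_finite {θ : Pt → Bool} {S : Set ((ℕ → Bool) × ℕ × ℕ)} (hS : S.Finite)
    (h : ∀ p : Pt, θ p = true ↔ ∃ q ∈ S, p.2 = q.2.2 ∧ ∀ i < q.2.1, p.1 i = q.1 i) :
    θ ∈ XX :=
  ⟨hS.toFinset.toList, fun p => by simpa using h p⟩

lemma dense_of_forall_finset_exists_eq {ι : Type*} {X : ι → Type*}
    [∀ i, TopologicalSpace (X i)] {S : Set (∀ i, X i)}
    (h : ∀ (I : Finset ι) (x : ∀ i, X i), ∃ y ∈ S, ∀ i ∈ I, y i = x i) : Dense S := by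
  refine dense_iff_inter_open.2 fun U hU ⟨x, hxU⟩ => ?_
  obtain ⟨I, u, hu, hIu⟩ := isOpen_pi_iff.1 hU x hxU
  obtain ⟨y, hyS, hyx⟩ := h I x
  exact ⟨y, hIu fun i hi => hyx i hi ▸ (hu i hi).2, hyS⟩

def cut (n : ℕ) (p : Pt) : (Fin n → Bool) × ℕ := (fun i => p.1 i, p.2)

lemma eventually_levels_lt_and_injOn_cut (I : Finset Pt) :
    ∀ᶠ n in atTop, (∀ p ∈ I, p.2 < n) ∧ InjOn (cut n) I := by
  refine ((eventually_all_finset I).2 fun p _ => eventually_gt_atTop p.2).and ?_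
  refine (eventually_all_finset I).2 fun p _ => (eventually_all_finset I).2 fun q _ => ?_
  by_cases hpq : p.1 = q.1
  · exact Eventually.of_forall fun n hcut => Prod.ext hpq (Prod.ext_iff.1 hcut).2
  · obtain ⟨j, hj⟩ := Function.ne_iff.1 hpq
    filter_upwards [eventually_gt_atTop j] with n hn hcut
    exact absurd (congrFun (congrArg Prod.fst hcut) ⟨j, hn⟩) hj

def pattern (n : ℕ) (c : (Fin n → Bool) × Fin n → Bool) : Pt → Bool :=
  fun p => if h : p.2 < n then c ((cut n p).1, ⟨p.2, h⟩) else decide (p.2 = n)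

section pattern

variable {n : ℕ} (c : (Fin n → Bool) × Fin n → Bool)

lemma pattern_apply_self (α : ℕ → Bool) : pattern n c (α, n) = true := by
  simp [pattern]

lemma le_of_pattern_apply_eq_true {p : Pt} (h : pattern n c p = true) : p.2 ≤ n := by
  unfold pattern at h
  split_ifs at h with hlt
  · exact hlt.le
  · exact (decide_eq_true_iff.1 h).le

lemma eq_of_pattern_eq {m : ℕ} {c' : (Fin m → Bool) × Fin m → Bool}
    (h : pattern n c = pattern m c') : n = m :=
  le_antisymm (le_of_pattern_apply_eq_true c' (h ▸ pattern_apply_self c fun _ => false))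
    (le_of_pattern_apply_eq_true c (h ▸ pattern_apply_self c' fun _ => false))

lemma pattern_mem_XX : pattern n c ∈ XX := by
  -- level `n` is the cylinder of the empty prefix; a selected `(s, m)` is coded by `s` padded with
  -- `false`
  refine mem_XX_of_finite (S := insert (fun _ => false, 0, n) (range fun q : {q // c q = true} =>
      ((fun i => if h : i < n then q.1.1 ⟨i, h⟩ else false), n, (q.1.2 : ℕ)))) (toFinite _) ?_
  rintro ⟨α, m⟩
  simp only [pattern, cut, mem_insert_iff, mem_range, exists_eq_or_imp, exists_exists_eq_and]
  split_ifs with hlt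
  · refine ⟨fun hc => Or.inr ⟨⟨_, hc⟩, rfl, fun i hi => by simp [hi]⟩, ?_⟩
    rintro (⟨rfl, -⟩ | ⟨⟨q, hq⟩, rfl, hα⟩)
    · exact absurd hlt (lt_irrefl _)
    · have hq_eq : ((fun i : Fin n => α i), (⟨q.2, hlt⟩ : Fin n)) = q :=
        Prod.ext (funext fun i => by simp [hα i i.2]) rfl
      rwa [hq_eq]
  · refine ⟨fun h => Or.inl ⟨of_decide_eq_true h, by simp⟩, ?_⟩
    rintro (⟨rfl, -⟩ | ⟨q, rfl, -⟩)
    · exact decide_eq_true rfl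
    · exact absurd q.1.2.2 hlt

end pattern

lemma exists_pattern_eqOn {n : ℕ} {I : Finset Pt} (hlt : ∀ p ∈ I, p.2 < n)
    (hinj : InjOn (cut n) I) (θ : Pt → Bool) : ∃ c, EqOn (pattern n c) θ I := by
  refine ⟨fun q => θ (Function.invFunOn (cut n) I (q.1, q.2)), fun p hp => ?_⟩
  simp only [pattern, dif_pos (hlt p hp)]
  exact congrArg θ (hinj.leftInvOn_invFunOn hp)

/-- There is a pairwise disjoint family of finite subsets of `𝕏` such that the union over
any infinite index set is dense in the cube `2^(2^ℕ × ℕ)` with the product topology. -/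
theorem exists_disjoint_finite_family_dense :
    ∃ A : ℕ → Set (Pt → Bool),
      (∀ n, A n ⊆ XX) ∧ (∀ n, (A n).Finite) ∧
      (∀ m n, m ≠ n → Disjoint (A m) (A n)) ∧
      ∀ E : Set ℕ, E.Infinite → Dense (⋃ k ∈ E, A k) := by
  refine ⟨fun n => range (pattern n), ?_, fun n => finite_range _, ?_, ?_⟩
  · rintro n _ ⟨c, rfl⟩
    exact pattern_mem_XX c
  · refine fun m n hmn => disjoint_left.2 ?_
    rintro _ ⟨c, rfl⟩ ⟨c', hcc'⟩
    exact hmn (eq_of_pattern_eq c hcc'.symm)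
  · refine fun E hE => dense_of_forall_finset_exists_eq fun I θ => ?_
    obtain ⟨k, ⟨hlt, hinj⟩, hkE⟩ := ((eventually_levels_lt_and_injOn_cut I).and_frequently
      (Nat.frequently_atTop_iff_infinite.2 hE)).exists
    obtain ⟨c, hc⟩ := exists_pattern_eqOn hlt hinj θ
    exact ⟨pattern k c, mem_biUnion hkE (mem_range_self c), hc⟩
end

section
/- Let I be an ideal on ℕ containing all finite sets, and ρ_I the topology on 2^{2^ℕ×ℕ} generated by the sets (α,p)⁺ = {θ : θ(α,p)=1} and (α,p)⁻ = {θ : θ(α,p)=0} for α ∈ I (where α is identified with its characteristic function in 2^ℕ) and p ∈ ℕ. Then 𝕏 is dense in (2^{2^ℕ×ℕ}, ρ_I). -/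
/-! `ρ_I` is coarser than the product topology, so it suffices to meet every basic open set of
the product topology, i.e. to match a given `θ` at finitely many points `(α, p)`. Choose `N` so
large that the finitely many `α` involved are already distinguished by their restrictions to `N`;
the union of the rectangles `[α ↾ N] × {p}` over those points with `θ (α, p) = 1` lies in `𝕏` and
agrees with `θ` at all of them. -/

theorem Dense.of_le_topology {X : Type*} {t₁ t₂ : TopologicalSpace X} (h : t₁ ≤ t₂) {s : Set X}
    (hs : @Dense X t₁ s) : @Dense X t₂ s :=
  (@dense_iff_inter_open X t₂ s).2 fun U hU hne =>
    (@dense_iff_inter_open X t₁ s).1 hs U (hU.mono h) hne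

theorem Finset.exists_eq_of_forall_lt_eq {α : Type*} (s : Finset (ℕ → α)) :
    ∃ N, ∀ f ∈ s, ∀ g ∈ s, (∀ i < N, f i = g i) → f = g := by
  suffices ∀ᶠ N in Filter.atTop, ∀ f ∈ s, ∀ g ∈ s, (∀ i < N, f i = g i) → f = g from this.exists
  simp only [Filter.eventually_all_finset]
  intro f _ g _
  by_cases hfg : f = g
  · exact Filter.Eventually.of_forall fun _ _ => hfg
  obtain ⟨i, hi⟩ := Function.ne_iff.mp hfg
  filter_upwards [Filter.eventually_gt_atTop i] with N hN hagree
  exact absurd (hagree i hN) hi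

theorem exists_mem_XX_forall_mem_eq (F : Finset Pt) (θ : Pt → Bool) :
    ∃ θ' ∈ XX, ∀ p ∈ F, θ' p = θ p := by
  classical
  obtain ⟨N, hN⟩ := (F.image Prod.fst).exists_eq_of_forall_lt_eq
  let L := ((F.filter (θ · = true)).toList).map fun p => (p.1, N, p.2)
  let θ' : Pt → Bool := fun p => decide (∃ q ∈ L, p.2 = q.2.2 ∧ ∀ i < q.2.1, p.1 i = q.1 i)
  refine ⟨θ', ⟨L, fun p => decide_eq_true_iff⟩, fun p hp => ?_⟩
  have hmem_iff : (∃ q ∈ L, p.2 = q.2.2 ∧ ∀ i < q.2.1, p.1 i = q.1 i) ↔ θ p = true := by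
    simp only [L, List.mem_map, Finset.mem_toList, Finset.mem_filter]
    constructor
    · rintro ⟨_, ⟨q, ⟨hqF, hθq⟩, rfl⟩, hsnd, hfst⟩
      have hfst_eq : p.1 = q.1 :=
        hN _ (Finset.mem_image_of_mem _ hp) _ (Finset.mem_image_of_mem _ hqF) hfst
      rwa [Prod.ext hfst_eq hsnd]
    · exact fun hθp => ⟨_, ⟨p, ⟨hp, hθp⟩, rfl⟩, rfl, fun _ _ => rfl⟩
  simp only [θ', hmem_iff, Bool.decide_eq_true]

theorem dense_XX : Dense XX := by
  refine dense_iff_inter_open.2 fun U hU ⟨θ, hθU⟩ => ?_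
  obtain ⟨F, u, hu, hFU⟩ := isOpen_pi_iff.1 hU θ hθU
  obtain ⟨θ', hθ'X, hθ'θ⟩ := exists_mem_XX_forall_mem_eq F θ
  exact ⟨θ', hFU fun p hp => hθ'θ p hp ▸ (hu p hp).2, hθ'X⟩

theorem pi_le_rho (I : Set (Set ℕ)) : Pi.topologicalSpace ≤ rho I := by
  refine le_generateFrom ?_
  rintro _ ⟨A, -, p, rfl | rfl⟩ <;>
    exact (isOpen_discrete {_}).preimage (continuous_apply (A.boolIndicator, p))

theorem XX_dense_rho_general (I : Set (Set ℕ)) :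
    @Dense _ (rho I) XX :=
  dense_XX.of_le_topology (pi_le_rho I)

/-- `𝕏` is dense in `(2^(2^ℕ×ℕ), ρ_I)`. -/
theorem XX_dense_rho (I : Set (Set ℕ)) (hI : IsIdeal I) :
    @Dense _ (rho I) XX :=
  XX_dense_rho_general I
end

section
/- Let I be an ideal on ℕ and let V be a finite intersection of subbasic ρ_I-open sets of the forms (α_i, p_i)⁺ and (β_j, q_j)⁻ with all α_i, β_j ∈ I. Then the symmetric difference {n : φ_n ∈ V} △ {n : ψ_n ∈ V} belongs to I. -/
/-!
`ψ_n` differs from `φ_n` only at points `(α, p)` with `α(n) = 1`. So if `n` lies outside the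
finite union `U ∈ I` of the `α_i` and `β_j`, then `φ_n` and `ψ_n` agree at every point that
defines `V`, and `φ_n ∈ V ↔ ψ_n ∈ V`: the symmetric difference is contained in `U`.
-/

lemma IsIdeal.biUnion_mem {I : Set (Set ℕ)} (hI : IsIdeal I) {ι : Type*} {s : Set ι}
    (hs : s.Finite) {f : ι → Set ℕ} (hf : ∀ i ∈ s, f i ∈ I) : (⋃ i ∈ s, f i) ∈ I := by
  induction s, hs using Set.Finite.induction_on with
  | empty => simpa using hI.2.2 ∅ Set.finite_empty
  | insert _ _ ih =>
    rw [Set.biUnion_insert]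
    exact hI.2.1 _ (hf _ (Set.mem_insert _ _)) _
      (ih fun i hi => hf i (Set.mem_insert_of_mem _ hi))

lemma symmDiff_setOf_subset {α : Type*} {P Q : α → Prop} {U : Set α}
    (h : ∀ a ∉ U, P a ↔ Q a) : symmDiff {a | P a} {a | Q a} ⊆ U := by
  intro a ha
  by_contra haU
  rw [Set.mem_symmDiff] at ha
  simp only [Set.mem_ofPred_eq, h a haU] at ha
  tauto

def basicOpen (Fp Fm : Set (Set ℕ × ℕ)) : Set (Pt → Bool) :=
  {θ | (∀ q ∈ Fp, θ (q.1.boolIndicator, q.2) = true) ∧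
       (∀ q ∈ Fm, θ (q.1.boolIndicator, q.2) = false)}

lemma mem_basicOpen_congr {Fp Fm : Set (Set ℕ × ℕ)} {θ θ' : Pt → Bool}
    (h : ∀ q ∈ Fp ∪ Fm, θ (q.1.boolIndicator, q.2) = θ' (q.1.boolIndicator, q.2)) :
    θ ∈ basicOpen Fp Fm ↔ θ' ∈ basicOpen Fp Fm := by
  refine and_congr (forall₂_congr fun q hq => ?_) (forall₂_congr fun q hq => ?_)
  · rw [h q (Or.inl hq)]
  · rw [h q (Or.inr hq)]

lemma psi_boolIndicator_of_notMem (φ : ℕ → Pt → Bool) {n : ℕ} {A : Set ℕ} (hn : n ∉ A)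
    (p : ℕ) : psi φ n (A.boolIndicator, p) = φ n (A.boolIndicator, p) := by
  simp [psi, Set.boolIndicator, hn]

theorem symmDiff_mem_ideal_general (I : Set (Set ℕ)) (hI : IsIdeal I)
    (φ : ℕ → Pt → Bool)
    (V : Set (Pt → Bool)) (Fp Fm : Set (Set ℕ × ℕ)) (hFp : Fp.Finite) (hFm : Fm.Finite)
    (hFpI : ∀ q ∈ Fp, q.1 ∈ I) (hFmI : ∀ q ∈ Fm, q.1 ∈ I)
    (hV : V = {θ | (∀ q ∈ Fp, θ (q.1.boolIndicator, q.2) = true) ∧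
                   (∀ q ∈ Fm, θ (q.1.boolIndicator, q.2) = false)}) :
    symmDiff {n | φ n ∈ V} {n | psi φ n ∈ V} ∈ I := by
  change V = basicOpen Fp Fm at hV
  subst hV
  have hU : (⋃ q ∈ Fp ∪ Fm, q.1) ∈ I :=
    hI.biUnion_mem (hFp.union hFm) fun q hq => hq.elim (hFpI q) (hFmI q)
  refine hI.1 _ hU _ (symmDiff_setOf_subset fun n hn => mem_basicOpen_congr fun q hq => ?_)
  exact (psi_boolIndicator_of_notMem φ (fun h => hn (Set.mem_biUnion hq h)) q.2).symm

/-- For a basic `ρ_I`-open set `V` (a finite intersection of subbasic sets with parameters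
in `I`), the symmetric difference `{n : φ_n ∈ V} △ {n : ψ_n ∈ V}` belongs to `I`. -/
theorem symmDiff_mem_ideal (I : Set (Set ℕ)) (hI : IsIdeal I)
    (φ : ℕ → Pt → Bool) (hinj : Function.Injective φ) (hran : Set.range φ = XX)
    (V : Set (Pt → Bool)) (Fp Fm : Set (Set ℕ × ℕ)) (hFp : Fp.Finite) (hFm : Fm.Finite)
    (hFpI : ∀ q ∈ Fp, q.1 ∈ I) (hFmI : ∀ q ∈ Fm, q.1 ∈ I)
    (hV : V = {θ | (∀ q ∈ Fp, θ (q.1.boolIndicator, q.2) = true) ∧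
                   (∀ q ∈ Fm, θ (q.1.boolIndicator, q.2) = false)}) :
    symmDiff {n | φ n ∈ V} {n | psi φ n ∈ V} ∈ I :=
  symmDiff_mem_ideal_general I hI φ V Fp Fm hFp hFm hFpI hFmI hV
end

section
/- For an ideal I on ℕ containing all finite sets and an infinite A ⊆ ℕ, define D(A) ⊆ 𝕏 as the set consisting of ∅ together with all φ = ⋃_{i≤k}[s_i]×{m_i} such that A ∩ s_i^{-1}(0) ≠ ∅ for every i. If A ∈ I, then D(A) is closed and nowhere dense in 𝕏 with the topology ρ_I restricted to 𝕏; if A ∉ I, then D(A) is dense in 𝕏 with this topology. -/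
/-- `D(A)`: the elements of `𝕏` admitting a representation `⋃ᵢ [sᵢ] × {mᵢ}` in which every
piece satisfies `A ∩ sᵢ⁻¹(0) ≠ ∅` (together with `∅`, coded by the empty list). -/
def DD (A : Set ℕ) : Set (Pt → Bool) :=
  {θ | ∃ L : List ((ℕ → Bool) × ℕ × ℕ),
    (∀ p : Pt, θ p = true ↔ ∃ q ∈ L, p.2 = q.2.2 ∧ ∀ i < q.2.1, p.1 i = q.1 i) ∧
    ∀ q ∈ L, ∃ i < q.2.1, q.1 i = false ∧ i ∈ A}

/-! ρ_I is the topology of pointwise convergence at the points `(B, m)` with `B ∈ I`, so a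
basic neighbourhood of `θ₀` prescribes its values at finitely many such points. Once `N` is so
large that these points are told apart by their first `N` coordinates, the union of the rectangles
`[B ↾ N] × {m}` over the prescribed points where `θ₀` is `1` lies in `𝕏` and has the prescribed
values. If `A ∉ I`, some `a ∈ A` lies in none of the finitely many `B`, and `N > a` puts this union
into `D(A)`. Adding a whole unprescribed column `2^ℕ × {m}` instead takes it out of `D(A)`, as
members of `D(A)` vanish at every `(α, m)` with `A ⊆ α⁻¹(1)`. For `A ∈ I` the points
`(B, m)` with `A ⊆ B ∈ I` already detect this inside `𝕏`, so `D(A)` is closed. -/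

open Filter Topology

def rectUnion (L : List ((ℕ → Bool) × ℕ × ℕ)) : Pt → Bool :=
  fun p => decide (∃ q ∈ L, p.2 = q.2.2 ∧ ∀ i < q.2.1, p.1 i = q.1 i)

theorem rectUnion_eq_true {L : List ((ℕ → Bool) × ℕ × ℕ)} {p : Pt} :
    rectUnion L p = true ↔ ∃ q ∈ L, p.2 = q.2.2 ∧ ∀ i < q.2.1, p.1 i = q.1 i :=
  decide_eq_true_iff

theorem rectUnion_mem_XX (L : List ((ℕ → Bool) × ℕ × ℕ)) : rectUnion L ∈ XX :=
  ⟨L, fun _ => rectUnion_eq_true⟩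

theorem rectUnion_mem_DD {A : Set ℕ} {L : List ((ℕ → Bool) × ℕ × ℕ)}
    (hL : ∀ q ∈ L, ∃ i < q.2.1, q.1 i = false ∧ i ∈ A) : rectUnion L ∈ DD A :=
  ⟨L, fun _ => rectUnion_eq_true, hL⟩

theorem apply_eq_false_of_mem_DD {A : Set ℕ} {θ : Pt → Bool} (hθ : θ ∈ DD A) {p : Pt}
    (hp : ∀ i ∈ A, p.1 i = true) : θ p = false := by
  obtain ⟨L, hL, hLA⟩ := hθ
  rw [← Bool.not_eq_true, hL]
  rintro ⟨q, hq, -, hpq⟩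
  obtain ⟨i, hi, hqi, hiA⟩ := hLA q hq
  simp [← hpq i hi, hp i hiA] at hqi

theorem IsIdeal.union_finite_mem {I : Set (Set ℕ)} (hI : IsIdeal I) {A B : Set ℕ} (hA : A ∈ I)
    (hB : B.Finite) : A ∪ B ∈ I :=
  hI.2.1 A hA B (hI.2.2 B hB)

theorem IsIdeal.biUnion_finset_mem {ι : Type*} {I : Set (Set ℕ)} (hI : IsIdeal I)
    (s : Finset ι) {f : ι → Set ℕ} (hf : ∀ i ∈ s, f i ∈ I) : (⋃ i ∈ s, f i) ∈ I := by
  classical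
  induction s using Finset.induction_on with
  | empty => simpa using hI.2.2 ∅ Set.finite_empty
  | insert j s _ ih =>
    rw [Finset.set_biUnion_insert]
    exact hI.2.1 _ (hf j (Finset.mem_insert_self j s)) _
      (ih fun i hi => hf i (Finset.mem_insert_of_mem hi))

/-- A piece `[s] × {m}` with `A ∩ s⁻¹(0) = ∅` contains the point `(A ∪ s⁻¹(1), m)`. -/
theorem mem_DD_iff_of_mem_XX {I : Set (Set ℕ)} (hI : IsIdeal I) {A : Set ℕ} (hAI : A ∈ I)
    {θ : Pt → Bool} (hθ : θ ∈ XX) :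
    θ ∈ DD A ↔ ∀ B ∈ I, A ⊆ B → ∀ m, θ (B.boolIndicator, m) = false := by
  refine ⟨fun h B _ hAB m => apply_eq_false_of_mem_DD h fun i hi =>
    (Set.mem_iff_boolIndicator B i).mp (hAB hi), fun h => ?_⟩
  obtain ⟨L, hL⟩ := hθ
  refine ⟨L, hL, fun q hq => ?_⟩
  by_contra! hqA
  set B := A ∪ {i | i < q.2.1 ∧ q.1 i = true}
  have hB : B ∈ I := hI.union_finite_mem hAI ((Set.finite_lt_nat q.2.1).subset fun i hi => hi.1)
  have hBq : ∀ i < q.2.1, B.boolIndicator i = q.1 i := by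
    intro i hi
    cases hqi : q.1 i
    · rw [← Set.notMem_iff_boolIndicator]
      rintro (hiA | ⟨-, hqi'⟩)
      · exact hqA i hi hqi hiA
      · simp [hqi] at hqi'
    · exact (Set.mem_iff_boolIndicator B i).mp (Or.inr ⟨hi, hqi⟩)
  have hθB : θ (B.boolIndicator, q.2.2) = true := (hL _).mpr ⟨q, hq, rfl, hBq⟩
  simp [h B hB Set.subset_union_left q.2.2] at hθB

theorem isOpen_rho_setOf_apply_eq {I : Set (Set ℕ)} {x : Pt} (hx : x.1 ⁻¹' {true} ∈ I)
    (b : Bool) : IsOpen[rho I] {θ | θ x = b} := by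
  have hxI : x = ((x.1 ⁻¹' {true}).boolIndicator, x.2) := by
    ext i <;> simp [Set.boolIndicator]
  rw [hxI]
  cases b
  · exact TopologicalSpace.isOpen_generateFrom_of_mem ⟨_, hx, x.2, Or.inr rfl⟩
  · exact TopologicalSpace.isOpen_generateFrom_of_mem ⟨_, hx, x.2, Or.inl rfl⟩

theorem isClosed_DD {I : Set (Set ℕ)} (hI : IsIdeal I) {A : Set ℕ} (hAI : A ∈ I) :
    IsClosed[subTop XX I] {θ : {θ // θ ∈ XX} | θ.1 ∈ DD A} := by
  let _ : TopologicalSpace (Pt → Bool) := rho I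
  rw [subTop, isClosed_induced_iff]
  refine ⟨⋂ B ∈ {B | B ∈ I ∧ A ⊆ B}, ⋂ m, {θ | θ (B.boolIndicator, m) = false},
    isClosed_biInter fun B hB => isClosed_iInter fun m => ?_, ?_⟩
  · have hopen := isOpen_rho_setOf_apply_eq (x := (B.boolIndicator, m))
      (by simpa [Set.preimage_boolIndicator_true] using hB.1) true
    refine isOpen_compl_iff.mp ?_
    convert hopen using 1
    ext
    simp
  ext ⟨θ, hθ⟩
  simp [mem_DD_iff_of_mem_XX hI hAI hθ]

theorem eventually_forall_eq_of_eqOn_lt {α β : Type*} (s : Finset α) (f : α → ℕ → β) :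
    ∀ᶠ N in atTop, ∀ x ∈ s, ∀ y ∈ s, (∀ i < N, f x i = f y i) → f x = f y := by
  simp only [eventually_all_finset]
  intro x _ y _
  by_cases hxy : f x = f y
  · exact Eventually.of_forall fun _ _ => hxy
  · obtain ⟨i, hi⟩ := Function.ne_iff.mp hxy
    filter_upwards [eventually_gt_atTop i] with N hN hagree
    exact absurd (hagree i hN) hi

noncomputable def cylinderCodes (θ₀ : Pt → Bool) (F : Finset Pt) (N : ℕ) :
    List ((ℕ → Bool) × ℕ × ℕ) :=
  (F.filter fun x => θ₀ x = true).toList.map fun x => (x.1, N, x.2)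

theorem mem_cylinderCodes {θ₀ : Pt → Bool} {F : Finset Pt} {N : ℕ} {q : (ℕ → Bool) × ℕ × ℕ} :
    q ∈ cylinderCodes θ₀ F N ↔ ∃ x ∈ F, θ₀ x = true ∧ (x.1, N, x.2) = q := by
  simp [cylinderCodes, and_assoc]

theorem rectUnion_cylinderCodes_append_apply {θ₀ : Pt → Bool} {F : Finset Pt} {N : ℕ}
    (hN : ∀ x ∈ F, ∀ y ∈ F, (∀ i < N, x.1 i = y.1 i) → x.1 = y.1)
    {E : List ((ℕ → Bool) × ℕ × ℕ)} (hE : ∀ q ∈ E, ∀ x ∈ F, x.2 ≠ q.2.2) :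
    ∀ x ∈ F, rectUnion (cylinderCodes θ₀ F N ++ E) x = θ₀ x := by
  intro x hx
  cases hθx : θ₀ x
  · rw [← Bool.not_eq_true, rectUnion_eq_true]
    rintro ⟨q, hq, hxq, hagree⟩
    rcases List.mem_append.mp hq with hq | hq
    · obtain ⟨y, hy, hθy, rfl⟩ := mem_cylinderCodes.mp hq
      have hxy : x = y := Prod.ext (hN x hx y hy hagree) hxq
      simp [hxy, hθy] at hθx
    · exact hE q hq x hx hxq
  · exact rectUnion_eq_true.mpr ⟨(x.1, N, x.2), List.mem_append_left _
      (mem_cylinderCodes.mpr ⟨x, hx, hθx, rfl⟩), rfl, fun _ _ => rfl⟩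

theorem exists_finset_eqOn_subset_of_isOpen_rho {I : Set (Set ℕ)} {U : Set (Pt → Bool)}
    (hU : IsOpen[rho I] U) {θ₀ : Pt → Bool} (hθ₀ : θ₀ ∈ U) :
    ∃ F : Finset Pt, (∀ x ∈ F, x.1 ⁻¹' {true} ∈ I) ∧ {θ | ∀ x ∈ F, θ x = θ₀ x} ⊆ U := by
  classical
  induction hU generalizing θ₀ with
  | basic S hS =>
    obtain ⟨B, hB, p, rfl | rfl⟩ := hS <;>
    exact ⟨{(B.boolIndicator, p)}, by simpa [Set.preimage_boolIndicator_true] using hB,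
      fun θ hθ => by simp_all⟩
  | univ => exact ⟨∅, by simp, Set.subset_univ _⟩
  | inter S T _ _ ihS ihT =>
    obtain ⟨F, hF, hFS⟩ := ihS hθ₀.1
    obtain ⟨G, hG, hGT⟩ := ihT hθ₀.2
    refine ⟨F ∪ G, fun x hx => (Finset.mem_union.mp hx).elim (hF x) (hG x), fun θ hθ => ?_⟩
    exact ⟨hFS fun x hx => hθ x (Finset.mem_union_left G hx),
      hGT fun x hx => hθ x (Finset.mem_union_right F hx)⟩
  | sUnion 𝒮 _ ih =>
    obtain ⟨S, hS, hθ₀S⟩ := hθ₀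
    obtain ⟨F, hF, hFS⟩ := ih S hS hθ₀S
    exact ⟨F, hF, hFS.trans (Set.subset_sUnion_of_mem hS)⟩

theorem dense_subTop_of_forall_finset {I : Set (Set ℕ)} {S : Set (Pt → Bool)}
    {P : (Pt → Bool) → Prop}
    (h : ∀ (θ₀ : Pt → Bool) (F : Finset Pt), (∀ x ∈ F, x.1 ⁻¹' {true} ∈ I) →
      ∃ θ ∈ S, P θ ∧ ∀ x ∈ F, θ x = θ₀ x) :
    @Dense _ (subTop S I) {θ | P θ.1} := by
  let _ := subTop S I
  rw [dense_iff_inter_open]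
  rintro U hU ⟨θ₀, hθ₀⟩
  obtain ⟨V, hV, rfl⟩ := (isOpen_induced_iff (t := rho I)).mp hU
  obtain ⟨F, hF, hFV⟩ := exists_finset_eqOn_subset_of_isOpen_rho hV hθ₀
  obtain ⟨θ, hθS, hPθ, hθF⟩ := h θ₀.1 F hF
  exact ⟨⟨θ, hθS⟩, hFV hθF, hPθ⟩

theorem dense_DD {I : Set (Set ℕ)} (hI : IsIdeal I) {A : Set ℕ} (hAI : A ∉ I) :
    @Dense _ (subTop XX I) {θ | θ.1 ∈ DD A} := by
  refine dense_subTop_of_forall_finset fun θ₀ F hF => ?_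
  obtain ⟨a, haA, haF⟩ : ∃ a ∈ A, ∀ x ∈ F, x.1 a = false := by
    have hFI := hI.biUnion_finset_mem F hF
    obtain ⟨a, haA, haF⟩ := Set.not_subset.mp fun hAF => hAI (hI.1 _ hFI A hAF)
    exact ⟨a, haA, by simpa using haF⟩
  obtain ⟨N, hN, haN⟩ :=
    ((eventually_forall_eq_of_eqOn_lt F Prod.fst).and (eventually_gt_atTop a)).exists
  refine ⟨rectUnion (cylinderCodes θ₀ F N ++ []), rectUnion_mem_XX _, rectUnion_mem_DD ?_,
    rectUnion_cylinderCodes_append_apply hN (by simp)⟩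
  intro q hq
  rw [List.append_nil] at hq
  obtain ⟨x, hx, -, rfl⟩ := mem_cylinderCodes.mp hq
  exact ⟨a, haN, haF x hx, haA⟩

theorem dense_compl_DD (I : Set (Set ℕ)) (A : Set ℕ) :
    @Dense _ (subTop XX I) {θ | θ.1 ∈ DD A}ᶜ := by
  refine dense_subTop_of_forall_finset (P := (· ∉ DD A)) fun θ₀ F _ => ?_
  obtain ⟨N, hN⟩ := (eventually_forall_eq_of_eqOn_lt F Prod.fst).exists
  set m := F.sup Prod.snd + 1
  -- a prefix of length `0`: the whole column `2^ℕ × {m}`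
  set column : (ℕ → Bool) × ℕ × ℕ := (fun _ => true, 0, m)
  refine ⟨rectUnion (cylinderCodes θ₀ F N ++ [column]), rectUnion_mem_XX _, fun hD => ?_,
    rectUnion_cylinderCodes_append_apply hN ?_⟩
  · have hcol : rectUnion (cylinderCodes θ₀ F N ++ [column]) (fun _ => true, m) = true :=
      rectUnion_eq_true.mpr ⟨column, by simp, rfl, by simp [column]⟩
    simp [apply_eq_false_of_mem_DD hD (p := (fun _ => true, m)) fun _ _ => rfl] at hcol
  · simp only [List.mem_singleton, forall_eq]
    intro x hx
    exact (Nat.lt_succ_of_le (Finset.le_sup (f := Prod.snd) hx)).ne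

theorem DD_closed_nwd_or_dense_general (I : Set (Set ℕ)) (hI : IsIdeal I)
    (A : Set ℕ) :
    (A ∈ I → @IsClosed _ (subTop XX I) {θ : {θ // θ ∈ XX} | θ.1 ∈ DD A} ∧
      @IsNowhereDense _ (subTop XX I) {θ : {θ // θ ∈ XX} | θ.1 ∈ DD A}) ∧
    (A ∉ I → @Dense _ (subTop XX I) {θ : {θ // θ ∈ XX} | θ.1 ∈ DD A}) := by
  let _ := subTop XX I
  exact ⟨fun hAI => isClosed_isNowhereDense_iff_compl.mpr
    ⟨(isClosed_DD hI hAI).isOpen_compl, dense_compl_DD I A⟩, dense_DD hI⟩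

/-- If `A ∈ I` then `D(A)` is closed and nowhere dense in `𝕏(I)`; if `A ∉ I` then `D(A)`
is dense in `𝕏(I)`. -/
theorem DD_closed_nwd_or_dense (I : Set (Set ℕ)) (hI : IsIdeal I)
    (A : Set ℕ) (hA : A.Infinite) :
    (A ∈ I → @IsClosed _ (subTop XX I) {θ : {θ // θ ∈ XX} | θ.1 ∈ DD A} ∧
      @IsNowhereDense _ (subTop XX I) {θ : {θ // θ ∈ XX} | θ.1 ∈ DD A}) ∧
    (A ∉ I → @Dense _ (subTop XX I) {θ : {θ // θ ∈ XX} | θ.1 ∈ DD A}) :=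
  DD_closed_nwd_or_dense_general I hI A
end

section
/- Let J ⊆ I be ideals on ℕ. If A ⊆ 2^{2^ℕ×ℕ} is nowhere dense in the topology ρ_J, then A is nowhere dense in the topology ρ_I. Consequently J* ⊆ I*, where K* = {F ⊆ ℕ : {φ_n : n ∈ F} is nowhere dense in 𝕏(K)}. -/
/-! Both `ρ_K` and its trace on `𝕏` are generated by the evaluations at the coordinates
`(α, p)` with `α ∈ K`, on a space realizing every finite pattern of coordinate values.
A basic `ρ_I`-open set is then a cylinder over `J`-coordinates, which is `ρ_J`-open, intersected
with a cylinder over the remaining coordinates, which is `ρ_J`-dense because coordinates can be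
set independently. If `A` is `ρ_J`-nowhere dense, the `ρ_J`-open cylinder contains a nonempty
`ρ_J`-open set missing `cl_J A`; the dense cylinder meets it, so the `ρ_I`-basic set is not inside
`cl_I A`. The space `𝕏` realizes all finite patterns since finitely many points of `2^ℕ × ℕ`
are told apart by prefixes of a common length. -/

open Set Filter Topology TopologicalSpace

theorem IsNowhereDense.of_le_of_factor {X : Type*} {s t : TopologicalSpace X} (hst : s ≤ t)
    (hfactor : ∀ U, IsOpen[s] U → U.Nonempty →
      ∃ V D, IsOpen[t] V ∧ V.Nonempty ∧ @Dense X t D ∧ V ∩ D ⊆ U)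
    {A : Set X} (hA : @IsNowhereDense X t A) : @IsNowhereDense X s A := by
  refine not_nonempty_iff_eq_empty.1 fun hU => ?_
  obtain ⟨V, D, hV, hVne, hD, hVD⟩ := hfactor _ (@isOpen_interior X s _) hU
  set W := V \ closure[t] A
  have hWo : IsOpen[t] W := @IsOpen.sdiff X _ _ t hV (@isClosed_closure X t A)
  have hWne : W.Nonempty := by
    by_contra hW
    rw [not_nonempty_iff_eq_empty, sdiff_eq_empty] at hW
    have := @interior_maximal X t _ _ hW hV
    rw [hA, subset_empty_iff] at this
    exact hVne.ne_empty this
  obtain ⟨z, hzW, hzD⟩ := (@dense_iff_inter_open X t D).1 hD W hWo hWne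
  have hz : z ∈ closure[s] A := @interior_subset X s _ _ (hVD ⟨hzW.1, hzD⟩)
  obtain ⟨a, haW, haA⟩ := (@mem_closure_iff X s z A).1 hz W (hWo.mono hst) hzW
  exact haW.2 (@subset_closure X t A _ haA)

section CoordTop

variable {X ι : Type*} (e : X → ι → Bool)

def coordTop (C : Set ι) : TopologicalSpace X :=
  generateFrom {S | ∃ c ∈ C, ∃ b : Bool, S = {x | e x c = b}}

def cylinder (x : X) (F : Finset ι) : Set X := {y | ∀ c ∈ F, e y c = e x c}

/-- Equivalently, `e` has dense range in the product topology of `ι → Bool`. -/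
def RealizesFinitePatterns : Prop := ∀ (F : Finset ι) (v : ι → Bool), ∃ x, ∀ c ∈ F, e x c = v c

variable {e}

theorem coordTop_anti {C D : Set ι} (hCD : C ⊆ D) : coordTop e D ≤ coordTop e C :=
  generateFrom_anti fun _ ⟨c, hc, b, hS⟩ => ⟨c, hCD hc, b, hS⟩

theorem coordTop_induced {Y : Type*} (f : Y → X) (C : Set ι) :
    (coordTop e C).induced f = coordTop (e ∘ f) C := by
  rw [coordTop, coordTop, induced_generateFrom_eq]
  congr 1
  ext S
  constructor
  · rintro ⟨_, ⟨c, hc, b, rfl⟩, rfl⟩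
    exact ⟨c, hc, b, rfl⟩
  · rintro ⟨c, hc, b, rfl⟩
    exact ⟨_, ⟨c, hc, b, rfl⟩, rfl⟩

theorem isOpen_cylinder {C : Set ι} (x : X) {F : Finset ι} (hF : ↑F ⊆ C) :
    IsOpen[coordTop e C] (cylinder e x F) := by
  have : cylinder e x F = ⋂ c ∈ F, {y | e y c = e x c} := by ext; simp [cylinder]
  rw [this]
  exact @isOpen_biInter_finset _ _ (coordTop e C) _ _ fun c hc =>
    isOpen_generateFrom_of_mem ⟨c, hF hc, _, rfl⟩

theorem exists_cylinder_subset {C : Set ι} {U : Set X} (hU : IsOpen[coordTop e C] U) {x : X}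
    (hx : x ∈ U) : ∃ F : Finset ι, ↑F ⊆ C ∧ cylinder e x F ⊆ U := by
  classical
  induction hU with
  | basic S hS =>
    obtain ⟨c, hc, b, rfl⟩ := hS
    exact ⟨{c}, by simpa using hc, fun y hy => (hy c (Finset.mem_singleton_self c)).trans hx⟩
  | univ => exact ⟨∅, by simp, subset_univ _⟩
  | inter S T _ _ ihS ihT =>
    obtain ⟨F, hFC, hFS⟩ := ihS hx.1
    obtain ⟨G, hGC, hGT⟩ := ihT hx.2
    refine ⟨F ∪ G, by simp [hFC, hGC], fun y hy => ⟨hFS fun c hc => ?_, hGT fun c hc => ?_⟩⟩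
    exacts [hy c (Finset.mem_union_left G hc), hy c (Finset.mem_union_right F hc)]
  | sUnion 𝒮 _ ih =>
    obtain ⟨S, hS, hxS⟩ := hx
    obtain ⟨F, hFC, hFS⟩ := ih S hS hxS
    exact ⟨F, hFC, hFS.trans (subset_sUnion_of_mem hS)⟩

theorem dense_cylinder (he : RealizesFinitePatterns e) {C : Set ι} (x : X) {F : Finset ι}
    (hF : Disjoint (↑F) C) : @Dense X (coordTop e C) (cylinder e x F) := by
  classical
  refine (@dense_iff_inter_open X (coordTop e C) _).2 fun U hU ⟨y, hy⟩ => ?_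
  obtain ⟨G, hGC, hGU⟩ := exists_cylinder_subset hU hy
  obtain ⟨z, hz⟩ := he (F ∪ G) fun c => if c ∈ F then e x c else e y c
  refine ⟨z, hGU fun c hc => ?_, fun c hc => ?_⟩
  · have hcF : c ∉ F := fun h => hF.notMem_of_mem_right (hGC hc) h
    rw [hz c (Finset.mem_union_right F hc), if_neg hcF]
  · rw [hz c (Finset.mem_union_left G hc), if_pos hc]

theorem IsNowhereDense.coordTop_mono (he : RealizesFinitePatterns e) {C D : Set ι}
    (hCD : C ⊆ D) {A : Set X} (hA : @IsNowhereDense X (coordTop e C) A) :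
    @IsNowhereDense X (coordTop e D) A := by
  classical
  refine IsNowhereDense.of_le_of_factor (coordTop_anti hCD) (fun U hU ⟨x, hx⟩ => ?_) hA
  obtain ⟨F, hFD, hFU⟩ := exists_cylinder_subset hU hx
  refine ⟨cylinder e x (F.filter (· ∈ C)), cylinder e x (F.filter (· ∉ C)),
    isOpen_cylinder x (by simp [Set.subset_def]), ⟨x, fun _ _ => rfl⟩,
    dense_cylinder he x ?_, fun y ⟨hyC, hyD⟩ => hFU fun c hc => ?_⟩
  · simp [Set.disjoint_left]
  · by_cases h : c ∈ C
    exacts [hyC c (Finset.mem_filter.2 ⟨hc, h⟩), hyD c (Finset.mem_filter.2 ⟨hc, h⟩)]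

end CoordTop

def idealCoords (K : Set (Set ℕ)) : Set Pt := Prod.fst ⁻¹' (Set.boolIndicator '' K)

theorem rho_eq_coordTop (K : Set (Set ℕ)) : rho K = coordTop id (idealCoords K) := by
  rw [rho, coordTop]
  congr 1
  ext S
  constructor
  · rintro ⟨A, hA, p, rfl | rfl⟩
    exacts [⟨_, ⟨A, hA, rfl⟩, true, rfl⟩, ⟨_, ⟨A, hA, rfl⟩, false, rfl⟩]
  · rintro ⟨⟨_, p⟩, ⟨A, hA, rfl⟩, b, rfl⟩
    cases b
    exacts [⟨A, hA, p, Or.inr rfl⟩, ⟨A, hA, p, Or.inl rfl⟩]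

theorem subTop_eq_coordTop (S : Set (Pt → Bool)) (K : Set (Set ℕ)) :
    subTop S K = coordTop Subtype.val (idealCoords K) := by
  rw [subTop, rho_eq_coordTop, coordTop_induced]
  rfl

theorem exists_separating_prefix {β : Type*} (S : Finset (ℕ → β)) :
    ∃ N, ∀ f ∈ S, ∀ g ∈ S, (∀ i < N, f i = g i) → f = g := by
  have hpair (f g : ℕ → β) : ∀ᶠ N in atTop, (∀ i < N, f i = g i) → f = g := by
    by_cases hfg : f = g
    · exact Eventually.of_forall fun _ _ => hfg
    obtain ⟨n, hn⟩ := Function.ne_iff.1 hfg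
    exact eventually_atTop.2 ⟨n + 1, fun N hN h => absurd (h n (by omega)) hn⟩
  exact ((eventually_all_finset S).2 fun f _ => (eventually_all_finset S).2 fun g _ =>
    hpair f g).exists

theorem realizesFinitePatterns_XX :
    RealizesFinitePatterns (Subtype.val : {θ // θ ∈ XX} → Pt → Bool) := by
  classical
  intro F v
  obtain ⟨N, hN⟩ := exists_separating_prefix (F.image Prod.fst)
  -- the rectangles `[a.1 ↾ N] × {a.2}` for the points `a ∈ F` where `v` is true
  let L := (F.filter (v · = true)).toList.map fun a => (a.1, N, a.2)
  let θ : Pt → Bool := fun p => decide (∃ q ∈ L, p.2 = q.2.2 ∧ ∀ i < q.2.1, p.1 i = q.1 i)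
  refine ⟨⟨θ, L, fun p => decide_eq_true_iff⟩, fun p hp => ?_⟩
  show decide _ = v p
  cases hvp : v p
  · rw [decide_eq_false_iff_not]
    rintro ⟨_, hq, hp₂, hp₁⟩
    obtain ⟨a, ha, rfl⟩ := List.mem_map.1 hq
    rw [Finset.mem_toList, Finset.mem_filter] at ha
    have hpa : p = a := Prod.ext
      (hN _ (Finset.mem_image_of_mem _ hp) _ (Finset.mem_image_of_mem _ ha.1) hp₁) hp₂
    rw [hpa, ha.2] at hvp
    exact Bool.noConfusion hvp
  · exact decide_eq_true
      ⟨(p.1, N, p.2), List.mem_map.2 ⟨p, by simp [hp, hvp], rfl⟩, rfl, fun _ _ => rfl⟩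

theorem nwd_mono_and_star_mono_general (J I : Set (Set ℕ))
    (hJI : J ⊆ I)
    (φ : ℕ → Pt → Bool) :
    (∀ A : Set (Pt → Bool), @IsNowhereDense _ (rho J) A → @IsNowhereDense _ (rho I) A) ∧
    starIdeal φ J ⊆ starIdeal φ I := by
  have hCoords : idealCoords J ⊆ idealCoords I := preimage_mono (image_mono hJI)
  refine ⟨fun A hA => ?_, fun F hF => ?_⟩
  · rw [rho_eq_coordTop] at hA ⊢
    exact hA.coordTop_mono (fun _ v => ⟨v, fun _ _ => rfl⟩) hCoords
  · rw [starIdeal, mem_ofPred_eq, subTop_eq_coordTop] at hF ⊢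
    exact hF.coordTop_mono realizesFinitePatterns_XX hCoords

/-- If `J ⊆ I`, then every `ρ_J`-nowhere dense set is `ρ_I`-nowhere dense; consequently
`J* ⊆ I*`. -/
theorem nwd_mono_and_star_mono (J I : Set (Set ℕ)) (hJ : IsIdeal J) (hI : IsIdeal I)
    (hJI : J ⊆ I)
    (φ : ℕ → Pt → Bool) (hinj : Function.Injective φ) (hran : Set.range φ = XX) :
    (∀ A : Set (Pt → Bool), @IsNowhereDense _ (rho J) A → @IsNowhereDense _ (rho I) A) ∧
    starIdeal φ J ⊆ starIdeal φ I :=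
  nwd_mono_and_star_mono_general J I hJI φ
end

section
/- Let I be an ideal on ℕ. If F ∈ I, then the set F̂ = {ψ_n : n ∈ F} is closed and discrete in 𝕐(I) = ({ψ_n : n ∈ ℕ}, ρ_I). -/
/-!
For `A ∈ I` the set `⋃ p, (α_A, p)⁻` is `ρ_I`-open. Since every `φ_m ∈ 𝕏` misses some point of
the fibre `{α_A} × ℕ`, while `ψ_m` contains the whole fibre exactly when `m ∈ A`, this open set
meets `𝕐` precisely in `𝕐 \ Â`; so `Â` is closed in `𝕐(I)` for every `A ∈ I`. Closedness of `F̂`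
is the case `A = F`, and `ψ_n` is isolated in `F̂` by the complement of the closed
set `{ψ_m : m ∈ F \ {n}}`.
-/

open Topology

def omitsFiber (A : Set ℕ) : Set (Pt → Bool) :=
  ⋃ p : ℕ, {θ | θ (A.boolIndicator, p) = false}

/-- `Â = {ψ_n : n ∈ A}` as a subset of `𝕐`. -/
def hat (φ : ℕ → Pt → Bool) (A : Set ℕ) : Set {θ // θ ∈ YY φ} :=
  {θ | ∃ n ∈ A, psi φ n = θ.1}

lemma exists_eq_false_of_mem_XX {θ : Pt → Bool} (hθ : θ ∈ XX) (α : ℕ → Bool) :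
    ∃ p, θ (α, p) = false := by
  obtain ⟨L, hL⟩ := hθ
  obtain ⟨p, hp⟩ := Infinite.exists_notMem_finset (L.map fun q => q.2.2).toFinset
  refine ⟨p, Bool.not_eq_true _ ▸ fun hθp => hp ?_⟩
  obtain ⟨q, hq, hpq, -⟩ := (hL (α, p)).mp hθp
  exact List.mem_toFinset.mpr (List.mem_map.mpr ⟨q, hq, hpq.symm⟩)

lemma isOpen_omitsFiber {I : Set (Set ℕ)} {A : Set ℕ} (hA : A ∈ I) :
    IsOpen[rho I] (omitsFiber A) :=
  @isOpen_iUnion _ _ (rho I) _ fun p =>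
    TopologicalSpace.GenerateOpen.basic _ ⟨A, hA, p, Or.inr rfl⟩

lemma psi_mem_omitsFiber_iff {φ : ℕ → Pt → Bool} {m : ℕ} (hφ : φ m ∈ XX) (A : Set ℕ) :
    psi φ m ∈ omitsFiber A ↔ m ∉ A := by
  simp only [omitsFiber, Set.mem_iUnion, Set.mem_ofPred_eq, psi, Bool.or_eq_false_iff,
    Set.notMem_iff_boolIndicator]
  exact ⟨fun ⟨_, _, hm⟩ => hm, fun hm =>
    (exists_eq_false_of_mem_XX hφ A.boolIndicator).imp fun _ hp => ⟨hp, hm⟩⟩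

lemma compl_hat {φ : ℕ → Pt → Bool} (hφ : ∀ m, φ m ∈ XX) (A : Set ℕ) :
    (hat φ A)ᶜ = Subtype.val ⁻¹' omitsFiber A := by
  ext ⟨_, m, rfl⟩
  simp only [hat, Set.mem_compl_iff, Set.mem_ofPred_eq, Set.mem_preimage,
    psi_mem_omitsFiber_iff (hφ m), not_exists, not_and]
  refine ⟨fun h hm => h m hm rfl, fun hm n hn hnm => ?_⟩
  have hn' := (psi_mem_omitsFiber_iff (hφ n) A).not_left.mpr hn
  exact hn' (hnm ▸ (psi_mem_omitsFiber_iff (hφ m) A).mpr hm)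

lemma isClosed_hat {I : Set (Set ℕ)} {φ : ℕ → Pt → Bool} (hφ : ∀ m, φ m ∈ XX) {A : Set ℕ}
    (hA : A ∈ I) : IsClosed[subTop (YY φ) I] (hat φ A) :=
  @IsClosed.mk _ (subTop (YY φ) I) _
    (compl_hat hφ A ▸ @isOpen_induced _ _ (rho I) _ _ (isOpen_omitsFiber hA))

lemma compl_hat_diff_singleton_inter_hat {φ : ℕ → Pt → Bool} (hφ : ∀ m, φ m ∈ XX)
    {A : Set ℕ} {n : ℕ} {y : {θ // θ ∈ YY φ}} (hn : n ∈ A) (hy : psi φ n = y.1) :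
    (hat φ (A \ {n}))ᶜ ∩ hat φ A = {y} := by
  ext z
  simp only [Set.mem_inter_iff, Set.mem_singleton_iff]
  constructor
  · rintro ⟨hz, m, hm, hmz⟩
    obtain rfl : m = n := by_contra fun hmn => hz ⟨m, ⟨hm, hmn⟩, hmz⟩
    exact Subtype.ext (hmz.symm.trans hy)
  · rintro rfl
    refine ⟨?_, n, hn, hy⟩
    rw [compl_hat hφ, Set.mem_preimage, ← hy, psi_mem_omitsFiber_iff (hφ n)]
    exact fun h => h.2 rfl

theorem Fhat_closed_discrete_general (I : Set (Set ℕ)) (hI : IsIdeal I)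
    (φ : ℕ → Pt → Bool) (hran : Set.range φ = XX)
    (F : Set ℕ) (hF : F ∈ I) :
    ∀ S : Set {θ // θ ∈ YY φ}, S = {θ | ∃ n ∈ F, psi φ n = θ.1} →
      @IsClosed _ (subTop (YY φ) I) S ∧
      ∀ y ∈ S, ∃ U, @IsOpen _ (subTop (YY φ) I) U ∧ U ∩ S = {y} := by
  rintro S rfl
  have hφ : ∀ m, φ m ∈ XX := fun m => hran ▸ Set.mem_range_self m
  refine ⟨isClosed_hat hφ hF, fun y ⟨n, hn, hy⟩ => ⟨(hat φ (F \ {n}))ᶜ, ?_,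
    compl_hat_diff_singleton_inter_hat hφ hn hy⟩⟩
  exact (isClosed_hat hφ (hI.1 F hF _ Set.sdiff_subset)).isOpen_compl

/-- If `F ∈ I`, then `F̂ = {ψ_n : n ∈ F}` is closed and discrete in `𝕐(I)`. -/
theorem Fhat_closed_discrete (I : Set (Set ℕ)) (hI : IsIdeal I)
    (φ : ℕ → Pt → Bool) (hinj : Function.Injective φ) (hran : Set.range φ = XX)
    (F : Set ℕ) (hF : F ∈ I) :
    ∀ S : Set {θ // θ ∈ YY φ}, S = {θ | ∃ n ∈ F, psi φ n = θ.1} →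
      @IsClosed _ (subTop (YY φ) I) S ∧
      ∀ y ∈ S, ∃ U, @IsOpen _ (subTop (YY φ) I) U ∧ U ∩ S = {y} :=
  Fhat_closed_discrete_general I hI φ hran F hF
end

section
/- Let I be a tall ideal on ℕ. Then 𝕐(I) contains no non-trivial convergent sequences: for every infinite A ⊆ ℕ, the set {ψ_n : n ∈ A} is not a convergent sequence in 𝕐(I). In particular, if I is tall, 𝕐(I) is not homeomorphic to 𝕏(I). -/
open Filter Topology

def slice (k : ℕ) : Pt → Bool := fun p => decide (p.2 = k)

lemma slice_injective : Function.Injective slice := fun k j h => by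
  simpa [slice] using congrFun h (fun _ => false, k)

lemma slice_mem_XX (k : ℕ) : slice k ∈ XX :=
  ⟨[(fun _ => false, 0, k)], fun p => by simp [slice]⟩

lemma const_false_mem_XX : (fun _ => false : Pt → Bool) ∈ XX := ⟨[], by simp⟩

lemma exists_apply_eq_false_of_mem_XX {θ : Pt → Bool} (hθ : θ ∈ XX) :
    ∃ N, ∀ α p, N ≤ p → θ (α, p) = false := by
  obtain ⟨L, hL⟩ := hθ
  refine ⟨(L.map fun q => q.2.2).sum + 1, fun α p hp => Bool.eq_false_iff.2 fun hθp => ?_⟩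
  obtain ⟨q, hqL, hq, -⟩ := (hL (α, p)).1 hθp
  have := List.le_sum_of_mem (List.mem_map_of_mem (f := fun q => q.2.2) hqL)
  omega

/-- No `(α, p)⁺` contains `∅`, and `(α, p)⁻` contains every slice `2^ℕ × {k}` with `k ≠ p`. -/
lemma tendsto_slice_rho (I : Set (Set ℕ)) :
    Tendsto slice atTop (@nhds _ (rho I) fun _ => false) := by
  rw [rho, TopologicalSpace.nhds_generateFrom]
  refine tendsto_iInf.2 fun S => tendsto_iInf.2 fun ⟨h0S, _, _, p, hS⟩ => tendsto_principal.2 ?_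
  rcases hS with rfl | rfl
  · exact absurd h0S Bool.false_ne_true
  · filter_upwards [eventually_gt_atTop p] with k hk
    simp [slice, hk.ne]

lemma psi_apply_boolIndicator_of_mem (φ : ℕ → Pt → Bool) {B : Set ℕ} {n : ℕ} (hn : n ∈ B)
    (p : ℕ) : psi φ n (B.boolIndicator, p) = true := by
  simp [psi, (B.mem_iff_boolIndicator n).1 hn]

/-- The neighbourhood `(χ_B, N)⁻` of `ψ_m` misses `ψ_n` for every `n ∈ B`; tallness provides such
a `B ∈ I` inside any infinite `A`, and `N` is taken above the support of `φ_m`. -/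
lemma exists_isOpen_psi_mem_infinite {I : Set (Set ℕ)}
    (htall : ∀ A : Set ℕ, A.Infinite → ∃ B ⊆ A, B.Infinite ∧ B ∈ I)
    {φ : ℕ → Pt → Bool} (hφ : ∀ n, φ n ∈ XX) {A : Set ℕ} (hA : A.Infinite) (m : ℕ) :
    ∃ U, IsOpen[rho I] U ∧ psi φ m ∈ U ∧ {n | n ∈ A ∧ psi φ n ∉ U}.Infinite := by
  obtain ⟨B, hBA, hB, hBI⟩ := htall (A \ {m}) (hA.sdiff (Set.finite_singleton m))
  obtain ⟨N, hN⟩ := exists_apply_eq_false_of_mem_XX (hφ m)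
  refine ⟨{θ | θ (B.boolIndicator, N) = false},
    TopologicalSpace.GenerateOpen.basic _ ⟨B, hBI, N, Or.inr rfl⟩, ?_,
    hB.mono fun n hn => ⟨(hBA hn).1, by simp [psi_apply_boolIndicator_of_mem φ hn]⟩⟩
  have hmB : B.boolIndicator m = false := (B.notMem_iff_boolIndicator m).1 fun h => (hBA h).2 rfl
  simp [psi, hN _ N le_rfl, hmB]

lemma not_tendsto_psi_comp_of_injective {I : Set (Set ℕ)}
    (htall : ∀ A : Set ℕ, A.Infinite → ∃ B ⊆ A, B.Infinite ∧ B ∈ I)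
    {φ : ℕ → Pt → Bool} (hφ : ∀ n, φ n ∈ XX) {n : ℕ → ℕ} (hn : Function.Injective n) (m : ℕ) :
    ¬ Tendsto (fun k => psi φ (n k)) atTop (@nhds _ (rho I) (psi φ m)) := by
  intro hconv
  obtain ⟨U, hU, hmU, hinf⟩ :=
    exists_isOpen_psi_mem_infinite htall hφ (Set.infinite_range_of_injective hn) m
  have hfin : {k | psi φ (n k) ∉ U}.Finite := by
    have := hconv (@IsOpen.mem_nhds _ (rho I) _ _ hU hmU)
    rw [← Nat.cofinite_eq_atTop] at this
    exact this
  refine hinf <| (hfin.image n).subset ?_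
  rintro _ ⟨⟨k, rfl⟩, hkU⟩
  exact ⟨k, hkU, rfl⟩

/-- A homeomorphism would carry the convergent sequence of slices in `𝕏(I)` to a convergent
sequence of distinct points of `𝕐(I)`. -/
lemma isEmpty_homeomorph_XX_YY {I : Set (Set ℕ)}
    (htall : ∀ A : Set ℕ, A.Infinite → ∃ B ⊆ A, B.Infinite ∧ B ∈ I)
    {φ : ℕ → Pt → Bool} (hφ : ∀ n, φ n ∈ XX) :
    IsEmpty (@Homeomorph {θ // θ ∈ XX} {θ // θ ∈ YY φ} (subTop XX I) (subTop (YY φ) I)) := by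
  let : TopologicalSpace (Pt → Bool) := rho I
  let : TopologicalSpace {θ // θ ∈ XX} := subTop XX I
  let : TopologicalSpace {θ // θ ∈ YY φ} := subTop (YY φ) I
  refine ⟨fun h => ?_⟩
  let x : ℕ → {θ // θ ∈ XX} := fun k => ⟨slice k, slice_mem_XX k⟩
  have hx : Tendsto x atTop (𝓝 ⟨fun _ => false, const_false_mem_XX⟩) :=
    tendsto_subtype_rng.2 (tendsto_slice_rho I)
  choose n hn using fun k => (h (x k)).2
  obtain ⟨m, hm⟩ := (h ⟨fun _ => false, const_false_mem_XX⟩).2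
  have hn_inj : Function.Injective n := by
    refine Function.Injective.of_comp (f := psi φ) fun k j hkj => slice_injective ?_
    have := h.injective (Subtype.val_injective ((hn k).symm.trans (hkj.trans (hn j))))
    exact congrArg Subtype.val this
  refine not_tendsto_psi_comp_of_injective htall hφ hn_inj m ?_
  simpa [hn, hm] using tendsto_subtype_rng.1 ((h.continuous.tendsto _).comp hx)

theorem YY_no_convergent_sequences_of_tall_general (I : Set (Set ℕ))
    (htall : ∀ A : Set ℕ, A.Infinite → ∃ B ⊆ A, B.Infinite ∧ B ∈ I)
    (φ : ℕ → Pt → Bool) (hran : Set.range φ = XX) :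
    (∀ A : Set ℕ, A.Infinite → ∀ θ ∈ YY φ,
      ¬ (∀ U : Set (Pt → Bool), @IsOpen _ (rho I) U → θ ∈ U →
          {n | n ∈ A ∧ psi φ n ∉ U}.Finite)) ∧
    IsEmpty (@Homeomorph {θ // θ ∈ XX} {θ // θ ∈ YY φ} (subTop XX I) (subTop (YY φ) I)) := by
  have hφ : ∀ n, φ n ∈ XX := fun n => hran ▸ Set.mem_range_self n
  refine ⟨fun A hA _ ⟨m, hm⟩ hconv => ?_, isEmpty_homeomorph_XX_YY htall hφ⟩
  obtain ⟨U, hU, hmU, hinf⟩ := exists_isOpen_psi_mem_infinite htall hφ hA m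
  exact hinf (hconv U hU (hm ▸ hmU))

/-- If `I` is tall, then `𝕐(I)` has no non-trivial convergent sequences: for every infinite
`A ⊆ ℕ`, the sequence `(ψ_n)_{n ∈ A}` converges to no point of `𝕐(I)`.  In particular,
`𝕐(I)` is not homeomorphic to `𝕏(I)`. -/
theorem YY_no_convergent_sequences_of_tall (I : Set (Set ℕ)) (hI : IsIdeal I)
    (htall : ∀ A : Set ℕ, A.Infinite → ∃ B ⊆ A, B.Infinite ∧ B ∈ I)
    (φ : ℕ → Pt → Bool) (hinj : Function.Injective φ) (hran : Set.range φ = XX) :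
    (∀ A : Set ℕ, A.Infinite → ∀ θ ∈ YY φ,
      ¬ (∀ U : Set (Pt → Bool), @IsOpen _ (rho I) U → θ ∈ U →
          {n | n ∈ A ∧ psi φ n ∉ U}.Finite)) ∧
    IsEmpty (@Homeomorph {θ // θ ∈ XX} {θ // θ ∈ YY φ} (subTop XX I) (subTop (YY φ) I)) :=
  YY_no_convergent_sequences_of_tall_general I htall φ hran
end
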